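/- arXiv:1711.02679 — 2 statements merged into one kernel-verified Lean document; each statement's English description precedes it below -/
import Mathlib

section
/- Fix T ≥ 1, N ≥ 1, M ≥ 1, and action values c_1, ..., c_M ∈ ℝ. For each instance i ∈ {1,...,N}, action j ∈ {1,...,M}, and time t ∈ {1,...,T}, let w^{(i)}_{t,j} ≥ 0 and y_t ∈ {0,1}. Define W_{i,j} := ∑_{t=1}^T w^{(i)}_{t,j}, the per-instance calibration contributions C^{(i)}_j := (W_{i,j}/T)·(ρ^{(i)}_j − c_j)^2 where ρ^{(i)}_j := (∑_t w^{(i)}_{t,j} y_t)/W_{i,j} for W_{i,j} > 0 (and C^{(i)}_j := 0 when W_{i,j} = 0), and analogously the pooled contributions C_j := ((∑_i W_{i,j})/T)·(ρ_j − c_j)^2 with ρ_j := (∑_i ∑_t w^{(i)}_{t,j} y_t)/(∑_i W_{i,j}) (C_j := 0 when ∑_i W_{i,j} = 0). Then the total pooled calibration error satisfies ∑_{j=1}^M C_j ≤ ∑_{i=1}^N ∑_{j=1}^M C^{(i)}_j. -/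
/-!
Write `m` for the `y`-weighted mass and `W` for the total weight of an action. Since
`W * (m / W - c) ^ 2 = (m - c * W) ^ 2 / W`, and Lean's `x / 0 = 0` matches the convention
that an empty bucket contributes nothing, each calibration term is `(m - c * W) ^ 2 / (W * T)`.
Pooling the instances adds up both `m - c * W` and `W`, so the claim is, action by action,
Sedrakyan's inequality `(∑ fᵢ) ^ 2 / ∑ gᵢ ≤ ∑ fᵢ ^ 2 / gᵢ`.
-/

open Finset

theorem Finset.sq_sum_div_le_sum_sq_div_of_nonneg {ι : Type*} (s : Finset ι) (f : ι → ℝ)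
    {g : ι → ℝ} (hg : ∀ i ∈ s, 0 ≤ g i) (hfg : ∀ i ∈ s, g i = 0 → f i = 0) :
    (∑ i ∈ s, f i) ^ 2 / ∑ i ∈ s, g i ≤ ∑ i ∈ s, f i ^ 2 / g i := by
  have hpos : ∀ i ∈ s, g i ≠ 0 → 0 < g i := fun i hi h => (hg i hi).lt_of_ne' h
  have hf : ∑ i ∈ s with 0 < g i, f i = ∑ i ∈ s, f i :=
    sum_filter_of_ne fun i hi hfi => hpos i hi fun h => hfi (hfg i hi h)
  have hg' : ∑ i ∈ s with 0 < g i, g i = ∑ i ∈ s, g i := sum_filter_of_ne hpos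
  have hfg' : ∑ i ∈ s with 0 < g i, f i ^ 2 / g i = ∑ i ∈ s, f i ^ 2 / g i :=
    sum_filter_of_ne fun i hi h => hpos i hi (div_ne_zero_iff.mp h).2
  rw [← hf, ← hg', ← hfg']
  exact sq_sum_div_le_sum_sq_div _ f fun i hi => (mem_filter.mp hi).2

theorem calibration_term_eq_sq_div {W ρ m c T : ℝ} (hW : 0 ≤ W) (hρ : 0 < W → ρ = m / W) :
    (if 0 < W then W / T * (ρ - c) ^ 2 else 0) = (m - c * W) ^ 2 / W / T := by
  split_ifs with h
  · rw [hρ h]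
    field_simp
  · simp [le_antisymm (not_lt.mp h) hW]

theorem sum_mul_eq_zero_of_sum_eq_zero {ι : Type*} {s : Finset ι} {w : ι → ℝ}
    (hw : ∀ t ∈ s, 0 ≤ w t) (h : ∑ t ∈ s, w t = 0) (y : ι → ℝ) : ∑ t ∈ s, w t * y t = 0 :=
  sum_eq_zero fun t ht => by rw [(sum_eq_zero_iff_of_nonneg hw).mp h t ht, zero_mul]

theorem total_pooled_calibration_le_general
    (T N M : ℕ)
    (c : Fin M → ℝ)
    (w : Fin N → Fin T → Fin M → ℝ) (y : Fin T → ℝ)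
    (hw : ∀ i t j, 0 ≤ w i t j)
    (Wij : Fin N → Fin M → ℝ) (hWij : ∀ i j, Wij i j = ∑ t, w i t j)
    (ρij : Fin N → Fin M → ℝ)
    (hρij : ∀ i j, 0 < Wij i j → ρij i j = (∑ t, w i t j * y t) / Wij i j)
    (Ci : Fin N → Fin M → ℝ)
    (hCi : ∀ i j, Ci i j =
      if 0 < Wij i j then (Wij i j / T) * (ρij i j - c j) ^ 2 else 0)
    (ρ : Fin M → ℝ)
    (hρ : ∀ j, 0 < ∑ i, Wij i j →
      ρ j = (∑ i, ∑ t, w i t j * y t) / (∑ i, Wij i j))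
    (C : Fin M → ℝ)
    (hC : ∀ j, C j =
      if 0 < ∑ i, Wij i j then ((∑ i, Wij i j) / T) * (ρ j - c j) ^ 2 else 0) :
    ∑ j, C j ≤ ∑ i, ∑ j, Ci i j := by
  set m : Fin N → Fin M → ℝ := fun i j => ∑ t, w i t j * y t
  have hWnn : ∀ i j, 0 ≤ Wij i j := fun i j => hWij i j ▸ sum_nonneg fun t _ => hw i t j
  have hm : ∀ i j, Wij i j = 0 → m i j - c j * Wij i j = 0 := fun i j h => by
    rw [h, mul_zero, sub_zero]
    exact sum_mul_eq_zero_of_sum_eq_zero (fun t _ => hw i t j) (hWij i j ▸ h) y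
  simp_rw [hCi, calibration_term_eq_sq_div (hWnn _ _) (hρij _ _), hC,
    calibration_term_eq_sq_div (sum_nonneg fun i _ => hWnn i _) (hρ _)]
  rw [sum_comm]
  refine sum_le_sum fun j _ => ?_
  have hpool : ∑ i, m i j - c j * ∑ i, Wij i j = ∑ i, (m i j - c j * Wij i j) := by
    rw [sum_sub_distrib, mul_sum]
  rw [hpool, ← sum_div]
  exact div_le_div_of_nonneg_right
    (sq_sum_div_le_sum_sq_div_of_nonneg _ _ (fun i _ => hWnn i j) fun i _ => hm i j)
    (Nat.cast_nonneg T)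

/-- The total pooled calibration error of the recalibration framework is at most the
sum over the `N` calibration instances of each instance's calibration error. -/
theorem total_pooled_calibration_le
    (T N M : ℕ) (hT : 1 ≤ T) (hN : 1 ≤ N) (hM : 1 ≤ M)
    (c : Fin M → ℝ)
    (w : Fin N → Fin T → Fin M → ℝ) (y : Fin T → ℝ)
    (hw : ∀ i t j, 0 ≤ w i t j) (hy : ∀ t, y t = 0 ∨ y t = 1)
    (Wij : Fin N → Fin M → ℝ) (hWij : ∀ i j, Wij i j = ∑ t, w i t j)
    (ρij : Fin N → Fin M → ℝ)
    (hρij : ∀ i j, 0 < Wij i j → ρij i j = (∑ t, w i t j * y t) / Wij i j)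
    (Ci : Fin N → Fin M → ℝ)
    (hCi : ∀ i j, Ci i j =
      if 0 < Wij i j then (Wij i j / T) * (ρij i j - c j) ^ 2 else 0)
    (ρ : Fin M → ℝ)
    (hρ : ∀ j, 0 < ∑ i, Wij i j →
      ρ j = (∑ i, ∑ t, w i t j * y t) / (∑ i, Wij i j))
    (C : Fin M → ℝ)
    (hC : ∀ j, C j =
      if 0 < ∑ i, Wij i j then ((∑ i, Wij i j) / T) * (ρ j - c j) ^ 2 else 0) :
    ∑ j, C j ≤ ∑ i, ∑ j, Ci i j :=
  total_pooled_calibration_le_general T N M c w y hw Wij hWij ρij hρij Ci hCi ρ hρ C hC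
end

section
/- Fix T ≥ 1 and N ≥ 1. Let y_t ∈ {0,1}, p_t ∈ [0,1], and p^F_t ∈ [0,1] for t = 1,...,T, and let ι : {1,...,T} → {0,...,N−1} be a bucket assignment such that p^F_t ∈ [ι(t)/N, (ι(t)+1)/N] for all t. For each i ∈ {0,...,N−1}, let T_i := #{t : ι(t) = i}, and when T_i > 0 define the per-bucket regret R_i := (1/T_i) ∑_{t : ι(t)=i} ((y_t − p_t)^2 − (y_t − i/N)^2) (and R_i := 0 when T_i = 0). Then (1/T) ∑_{t=1}^T (y_t − p_t)^2 − (1/T) ∑_{t=1}^T (y_t − p^F_t)^2 ≤ ∑_{i=0}^{N−1} (T_i/T)·R_i + 2/N. -/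
open Finset

/-!
On a round with `p^F_t ∈ [i/N, (i+1)/N]`, replacing `p^F_t` by the bucket's left endpoint `i/N`
costs at most `2/N` in squared loss, since `(y - a)² - (y - b)² = (b - a)(2y - a - b)` with
`0 ≤ b - a ≤ 1/N` and `2y - a - b ≤ 2`. Grouping the rounds by bucket, the loss of the
recalibrated predictions minus the loss of the constant predictions `i/N` is exactly
`∑ᵢ Tᵢ Rᵢ`; adding the two estimates and dividing by `T` gives the bound.
-/

lemma sq_sub_sub_sq_sub_le {y a b : ℝ} (hy : y ≤ 1) (ha : 0 ≤ a) (hab : a ≤ b) :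
    (y - a) ^ 2 - (y - b) ^ 2 ≤ 2 * (b - a) := by
  have hfactor : (y - a) ^ 2 - (y - b) ^ 2 = (b - a) * (2 * y - a - b) := by ring
  rw [hfactor]
  nlinarith

lemma sq_sub_left_endpoint_sub_sq_sub_le {N : ℕ} (i : ℕ) {y x : ℝ} (hy : y ≤ 1)
    (hx : x ∈ Set.Icc ((i : ℝ) / N) (((i : ℝ) + 1) / N)) :
    (y - (i : ℝ) / N) ^ 2 - (y - x) ^ 2 ≤ 2 / N := by
  calc (y - (i : ℝ) / N) ^ 2 - (y - x) ^ 2 ≤ 2 * (x - (i : ℝ) / N) :=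
        sq_sub_sub_sq_sub_le hy (by positivity) hx.1
    _ ≤ 2 * (((i : ℝ) + 1) / N - (i : ℝ) / N) := by linarith [hx.2]
    _ = 2 / N := by ring

lemma card_mul_average_eq_sum {α : Type*} (s : Finset α) (f : α → ℝ) :
    (#s : ℝ) * (if 0 < #s then (1 / (#s : ℝ)) * ∑ t ∈ s, f t else 0) = ∑ t ∈ s, f t := by
  split_ifs with hs
  · field_simp
  · rw [Nat.not_lt, Nat.le_zero, card_eq_zero] at hs
    simp [hs]

lemma div_le_div_add_of_le_add {x w T c : ℝ} (hT : 0 ≤ T) (hc : 0 ≤ c) (h : x ≤ w + T * c) :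
    x / T ≤ w / T + c := by
  rcases hT.eq_or_lt with rfl | hT
  · simpa using hc
  · rw [div_add' _ _ _ hT.ne', div_le_div_iff_of_pos_right hT]
    linarith

theorem recalibration_regret_bound_general
    (T N : ℕ)
    (y p pF : Fin T → ℝ) (ι : Fin T → Fin N)
    (hy : ∀ t, y t = 0 ∨ y t = 1)
    (hpF : ∀ t, pF t ∈ Set.Icc ((ι t : ℝ) / N) (((ι t : ℝ) + 1) / N))
    (Ti : Fin N → ℕ) (hTi : ∀ i, Ti i = (univ.filter (fun t => ι t = i)).card)
    (R : Fin N → ℝ)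
    (hR : ∀ i, R i =
      if 0 < Ti i then
        (1 / (Ti i : ℝ)) * ∑ t ∈ univ.filter (fun t => ι t = i),
          ((y t - p t) ^ 2 - (y t - (i : ℝ) / N) ^ 2)
      else 0) :
    (1 / (T : ℝ)) * ∑ t, (y t - p t) ^ 2 - (1 / (T : ℝ)) * ∑ t, (y t - pF t) ^ 2 ≤
      ∑ i, ((Ti i : ℝ) / T) * R i + 2 / N := by
  have hbuckets : ∑ i, (Ti i : ℝ) * R i =
      ∑ t, ((y t - p t) ^ 2 - (y t - (ι t : ℝ) / N) ^ 2) := by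
    rw [← sum_fiberwise univ ι]
    refine sum_congr rfl fun i _ => ?_
    rw [hR, hTi, card_mul_average_eq_sum]
    exact sum_congr rfl fun t ht => by rw [(mem_filter.mp ht).2]
  have hy₁ : ∀ t, y t ≤ 1 := fun t => by rcases hy t with h | h <;> simp [h]
  have hendpoints : ∑ t, ((y t - (ι t : ℝ) / N) ^ 2 - (y t - pF t) ^ 2) ≤ T * (2 / N) := by
    simpa using sum_le_sum fun t (_ : t ∈ univ) =>
      sq_sub_left_endpoint_sub_sq_sub_le (ι t) (hy₁ t) (hpF t)
  rw [← mul_sub, one_div_mul_eq_div]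
  simp_rw [div_mul_eq_mul_div, ← sum_div]
  refine div_le_div_add_of_le_add T.cast_nonneg (by positivity) ?_
  rw [hbuckets]
  simp only [sum_sub_distrib] at hendpoints ⊢
  linarith

/-- Finite-horizon regret bound of the recalibration framework: the average squared
loss of the recalibrated predictions exceeds that of the original forecasts by at
most the weighted per-bucket regrets plus `2/N`. -/
theorem recalibration_regret_bound
    (T N : ℕ) (hT : 1 ≤ T) (hN : 1 ≤ N)
    (y p pF : Fin T → ℝ) (ι : Fin T → Fin N)
    (hy : ∀ t, y t = 0 ∨ y t = 1)
    (hp : ∀ t, p t ∈ Set.Icc (0 : ℝ) 1)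
    (hpF : ∀ t, pF t ∈ Set.Icc ((ι t : ℝ) / N) (((ι t : ℝ) + 1) / N))
    (Ti : Fin N → ℕ) (hTi : ∀ i, Ti i = (univ.filter (fun t => ι t = i)).card)
    (R : Fin N → ℝ)
    (hR : ∀ i, R i =
      if 0 < Ti i then
        (1 / (Ti i : ℝ)) * ∑ t ∈ univ.filter (fun t => ι t = i),
          ((y t - p t) ^ 2 - (y t - (i : ℝ) / N) ^ 2)
      else 0) :
    (1 / (T : ℝ)) * ∑ t, (y t - p t) ^ 2 - (1 / (T : ℝ)) * ∑ t, (y t - pF t) ^ 2 ≤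
      ∑ i, ((Ti i : ℝ) / T) * R i + 2 / N :=
  recalibration_regret_bound_general T N y p pF ι hy hpF Ti hTi R hR
end
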